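/- arXiv:1904.02550 — 2 statements merged into one kernel-verified Lean document; each statement's English description precedes it below -/
import Mathlib

section
/- For any prime p > 3, the sum over k from 1 to p-1 of k times the sum over 1 ≤ i < j ≤ k of (1/(i j^3) + 1/(i^3 j)) is congruent to (1/2)·B_{p-3} modulo p. -/
/-!
Write `S` for the triple sum. Modulo `p`, swapping the sums and using `∑_{j ≤ k < p} k ≡ (j - j²)/2`
gives `2 S ≡ ∑_{i<j} (1/(i j²) - 1/(i j) + 1/i³ - j/i³)`. The power sums `∑_{0<k<p} k⁻ᵐ` vanish
for `0 < m < p - 1`; this kills the second double sum (via `2 ∑_{i<j} x_i x_j = (∑ x)² - ∑ x²`)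
and, after summing out `j`, the last two. For the first one, Faulhaber's
formula with exponent `p - 2` gives `∑_{i<j} 1/i ≡ -∑_t B_t binom(p-1, t) j^(p-1-t)`, and summing
against `1/j²` keeps only `t = p - 3`, with `binom(p-1, p-3) ≡ 1`.

To reduce the rational numbers modulo `p`, everything is lifted to `ℤ_[p]`: `1/n` becomes
`PadicInt.inv n` and `B_t` (which is `p`-integral for `t + 1 < p`) becomes `padicIntBernoulli p t`.
-/

open Finset

section PairSum

variable {R : Type*} [CommRing R]

def pairSum (f g : ℕ → R) (n : ℕ) : R :=
  ∑ j ∈ Icc 1 n, ∑ i ∈ Ico 1 j, f i * g j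

theorem pairSum_eq_sum_mul_sum_Icc (f g : ℕ → R) (n : ℕ) :
    pairSum f g n = ∑ i ∈ Icc 1 n, f i * ∑ j ∈ Icc (i + 1) n, g j := by
  simp_rw [pairSum, mul_sum]
  exact sum_comm' fun j i ↦ by simp only [mem_Icc, mem_Ico]; omega

theorem pairSum_congr {f f' g g' : ℕ → R} {n : ℕ} (hf : ∀ i ∈ Icc 1 n, f i = f' i)
    (hg : ∀ j ∈ Icc 1 n, g j = g' j) : pairSum f g n = pairSum f' g' n :=
  sum_congr rfl fun j hj ↦ sum_congr rfl fun i hi ↦ by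
    rw [hg j hj, hf i (by simp only [mem_Icc, mem_Ico] at hi hj ⊢; omega)]

theorem pairSum_sub_right (f g h : ℕ → R) (n : ℕ) :
    pairSum f (fun j ↦ g j - h j) n = pairSum f g n - pairSum f h n := by
  simp only [pairSum, mul_sub, sum_sub_distrib]

theorem mul_pairSum (c : R) (f g : ℕ → R) (n : ℕ) :
    c * pairSum f g n = pairSum f (fun j ↦ c * g j) n := by
  simp only [pairSum, mul_sum]
  exact sum_congr rfl fun j _ ↦ sum_congr rfl fun i _ ↦ by ring

theorem two_mul_pairSum_self (f : ℕ → R) (n : ℕ) :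
    2 * pairSum f f n = (∑ k ∈ Icc 1 n, f k) ^ 2 - ∑ k ∈ Icc 1 n, f k ^ 2 := by
  induction n with
  | zero => simp [pairSum]
  | succ n ih =>
    have hIco : Ico 1 (n + 1) = Icc 1 n := Ico_add_one_right_eq_Icc 1 n
    rw [pairSum, sum_Icc_succ_top (by omega), ← pairSum, hIco, mul_add, ih,
      sum_Icc_succ_top (by omega), sum_Icc_succ_top (by omega), ← sum_mul]
    ring

theorem sum_mul_pairSum (a f g : ℕ → R) (n : ℕ) :
    ∑ k ∈ Icc 1 n, a k * pairSum f g k =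
      pairSum f (fun j ↦ (∑ k ∈ Icc j n, a k) * g j) n := by
  unfold pairSum
  simp_rw [mul_sum]
  rw [sum_comm' (t' := Icc 1 n) (s' := fun j ↦ Icc j n) fun k j ↦ by simp only [mem_Icc]; omega]
  refine sum_congr rfl fun j _ ↦ ?_
  rw [sum_comm]
  simp only [← sum_mul, ← mul_sum]
  ring

/-- `r m` stands for `1 / m`, so that the sum can be transported along ring homomorphisms. -/
def weightedMHS (r : ℕ → R) (n : ℕ) : R :=
  ∑ k ∈ Icc 1 n, (k : R) * (pairSum r (fun j ↦ r j ^ 3) k + pairSum (fun i ↦ r i ^ 3) r k)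

theorem map_weightedMHS {S : Type*} [CommRing S] (φ : R →+* S) (r : ℕ → R) (n : ℕ) :
    φ (weightedMHS r n) = weightedMHS (φ ∘ r) n := by
  simp [weightedMHS, pairSum, map_sum]

theorem weightedMHS_congr {r r' : ℕ → R} {n : ℕ} (h : ∀ m ∈ Icc 1 n, r m = r' m) :
    weightedMHS r n = weightedMHS r' n := by
  refine sum_congr rfl fun k hk ↦ ?_
  have hk' : ∀ m ∈ Icc 1 k, r m = r' m := fun m hm ↦
    h m (by simp only [mem_Icc] at hm hk ⊢; omega)
  rw [pairSum_congr hk' fun j hj ↦ by rw [hk' j hj], pairSum_congr (fun i hi ↦ by rw [hk' i hi]) hk']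

theorem weightedMHS_eq_pairSum (r : ℕ → R) (n : ℕ) :
    weightedMHS r n =
      pairSum r (fun j ↦ (∑ k ∈ Icc j n, (k : R)) * r j ^ 3) n +
        pairSum (fun i ↦ r i ^ 3) (fun j ↦ (∑ k ∈ Icc j n, (k : R)) * r j) n := by
  simp only [weightedMHS, mul_add, sum_add_distrib, sum_mul_pairSum]

theorem weightedMHS_inv_eq_sum {K : Type*} [Field K] (n : ℕ) :
    weightedMHS (fun m : ℕ ↦ (m : K)⁻¹) n = ∑ k ∈ Icc 1 n, (k : K) *
      ∑ j ∈ Icc 1 k, ∑ i ∈ Ico 1 j, (1 / ((i : K) * (j : K) ^ 3) + 1 / ((i : K) ^ 3 * j)) := by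
  simp only [weightedMHS, pairSum, one_div, mul_inv, inv_pow, ← sum_add_distrib]

end PairSum

namespace PadicInt

variable {p : ℕ} [Fact p.Prime]

theorem coe_inv_of_norm_eq_one {x : ℤ_[p]} (hx : ‖x‖ = 1) :
    ((x.inv : ℤ_[p]) : ℚ_[p]) = (x : ℚ_[p])⁻¹ := by
  obtain ⟨x, _⟩ := x
  simp_all [inv]

theorem toZMod_inv (x : ℤ_[p]) : toZMod x.inv = (toZMod x)⁻¹ := by
  rcases x.norm_le_one.eq_or_lt with hx | hx
  · exact eq_inv_of_mul_eq_one_left (by rw [← map_mul, inv_mul hx, map_one])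
  · have hinv : x.inv = 0 := by
      obtain ⟨x, _⟩ := x
      exact dif_neg hx.ne
    rw [hinv, map_zero, eq_comm, inv_eq_zero, ← RingHom.mem_ker, ker_toZMod,
      IsLocalRing.mem_maximalIdeal, mem_nonunits]
    exact hx

theorem norm_le_inv_of_toZMod_eq_zero {x : ℤ_[p]} (hx : toZMod x = 0) :
    ‖x‖ ≤ (p : ℝ) ^ (-1 : ℤ) := by
  rw [show (-1 : ℤ) = -(1 : ℕ) by rfl, norm_le_pow_iff_mem_span_pow, pow_one,
    ← maximalIdeal_eq_span_p, ← ker_toZMod]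
  exact hx

theorem coe_natCast_inv {n : ℕ} (h0 : n ≠ 0) (hn : n < p) :
    (((n : ℤ_[p]).inv : ℤ_[p]) : ℚ_[p]) = (n : ℚ_[p])⁻¹ := by
  rw [coe_inv_of_norm_eq_one (norm_natCast_eq_one_iff.2 (Nat.coprime_of_lt_prime h0 hn Fact.out)),
    coe_natCast]

theorem coe_weightedMHS_inv {n : ℕ} (hn : n < p) :
    ((weightedMHS (fun m : ℕ ↦ (m : ℤ_[p]).inv) n : ℤ_[p]) : ℚ_[p]) =
      weightedMHS (fun m : ℕ ↦ (m : ℚ_[p])⁻¹) n := by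
  refine (map_weightedMHS Coe.ringHom _ n).trans (weightedMHS_congr fun m hm ↦ ?_)
  rw [mem_Icc] at hm
  exact coe_natCast_inv (by omega) (by omega)

theorem toZMod_weightedMHS_inv (n : ℕ) :
    toZMod (weightedMHS (fun m : ℕ ↦ (m : ℤ_[p]).inv) n) =
      weightedMHS (fun m : ℕ ↦ (m : ZMod p)⁻¹) n := by
  rw [map_weightedMHS]
  simp only [Function.comp_def, toZMod_inv, map_natCast]

end PadicInt

-- `(m + 1) B_m = -∑_{k<m} binom(m+1, k) B_k`, and `m + 1` is a `p`-adic unit.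
theorem Padic.norm_bernoulli_le_one {p : ℕ} [hp : Fact p.Prime] {m : ℕ} (hm : m + 1 < p) :
    ‖(bernoulli m : ℚ_[p])‖ ≤ 1 := by
  induction m using Nat.strong_induction_on with
  | _ m ih =>
  rcases Nat.eq_zero_or_pos m with rfl | hm0
  · simp
  have hrec := sum_bernoulli (m + 1)
  rw [if_neg (by omega), sum_range_succ, Nat.choose_succ_self_right] at hrec
  have hq : ((m + 1 : ℕ) : ℚ_[p]) * bernoulli m =
      -∑ k ∈ range m, ((m + 1).choose k : ℚ_[p]) * bernoulli k := by
    rw [eq_neg_iff_add_eq_zero, add_comm]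
    exact_mod_cast hrec
  have hunit : ‖((m + 1 : ℕ) : ℚ_[p])‖ = 1 :=
    Padic.norm_natCast_eq_one_iff.2 (Nat.coprime_of_lt_prime m.succ_ne_zero hm hp.out)
  have hsum := congrArg norm hq
  rw [norm_mul, hunit, one_mul, norm_neg] at hsum
  rw [hsum]
  refine IsUltrametricDist.norm_sum_le_of_forall_le_of_nonneg zero_le_one fun k hk => ?_
  rw [norm_mul]
  exact mul_le_one₀ (mod_cast Padic.norm_int_le_one ((m + 1).choose k)) (norm_nonneg _)
    (ih k (mem_range.1 hk) (by grind))

noncomputable def padicIntBernoulli (p : ℕ) [Fact p.Prime] (t : ℕ) : ℤ_[p] :=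
  if h : t + 1 < p then ⟨bernoulli t, Padic.norm_bernoulli_le_one h⟩ else 0

theorem coe_padicIntBernoulli {p : ℕ} [Fact p.Prime] {t : ℕ} (h : t + 1 < p) :
    (padicIntBernoulli p t : ℚ_[p]) = bernoulli t := by
  simp [padicIntBernoulli, h]

namespace ZMod

variable {p : ℕ} [hp : Fact p.Prime]

theorem natCast_ne_zero_of_lt {k : ℕ} (h0 : k ≠ 0) (hk : k < p) : (k : ZMod p) ≠ 0 := by
  rw [Ne, natCast_eq_zero_iff]
  exact Nat.not_dvd_of_pos_of_lt (Nat.pos_of_ne_zero h0) hk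

theorem sum_Icc_natCast_eq_sum_units {M : Type*} [AddCommMonoid M] (g : ZMod p → M) :
    ∑ k ∈ Icc 1 (p - 1), g k = ∑ u : (ZMod p)ˣ, g u := by
  have hp0 := hp.out.pos
  refine sum_bij' (fun k hk ↦ Units.mk0 (k : ZMod p) (natCast_ne_zero_of_lt (by grind) (by grind)))
    (fun u _ ↦ (u : ZMod p).val) (fun _ _ ↦ mem_univ _) (fun u _ ↦ ?_) (fun k hk ↦ ?_)
    (fun u _ ↦ Units.ext (natCast_zmod_val _)) (fun _ _ ↦ rfl)
  · have := val_lt (u : ZMod p)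
    have := (val_ne_zero (u : ZMod p)).2 u.ne_zero
    grind
  · simp [val_cast_of_lt (show k < p by grind)]

theorem sum_Icc_inv_pow (m : ℕ) :
    ∑ k ∈ Icc 1 (p - 1), (k : ZMod p)⁻¹ ^ m = if p - 1 ∣ m then -1 else 0 := by
  have hunits := FiniteField.sum_pow_units (ZMod p) m
  rw [card] at hunits
  rw [sum_Icc_natCast_eq_sum_units (fun x ↦ x⁻¹ ^ m), ← hunits]
  exact Fintype.sum_equiv (Equiv.inv _) _ _ fun u ↦ by
    rw [Equiv.inv_apply, Units.val_inv_eq_inv_val]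

theorem sum_Icc_inv_pow_eq_zero {m : ℕ} (h0 : m ≠ 0) (hm : m < p - 1) :
    ∑ k ∈ Icc 1 (p - 1), (k : ZMod p)⁻¹ ^ m = 0 := by
  rw [sum_Icc_inv_pow, if_neg fun h ↦ (Nat.le_of_dvd (Nat.pos_of_ne_zero h0) h).not_gt hm]

theorem two_mul_sum_Icc_natCast {j : ℕ} (hj : j ≤ p) :
    2 * ∑ k ∈ Icc j (p - 1), (k : ZMod p) = j - j ^ 2 := by
  have hgauss (n : ℕ) : 2 * ∑ i ∈ range n, (i : ZMod p) = n * (n - 1) := by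
    rcases n with _ | n
    · simp
    · have := congrArg (Nat.cast : ℕ → ZMod p) (sum_range_id_mul_two (n + 1))
      push_cast at this ⊢
      linear_combination this
  have hIco : Icc j (p - 1) = Ico j p := by
    ext k
    simp only [mem_Icc, mem_Ico]
    have := hp.out.pos
    omega
  rw [hIco, sum_Ico_eq_sub _ hj, mul_sub, hgauss, hgauss, natCast_self]
  ring

theorem natCast_choose_pred {k : ℕ} (hk : k < p) : ((p - 1).choose k : ZMod p) = (-1) ^ k := by
  induction k with
  | zero => simp
  | succ k ih =>
    have hpascal := Nat.choose_succ_succ' (p - 1) k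
    rw [Nat.sub_add_cancel hp.out.one_le] at hpascal
    have hdvd : ((p.choose (k + 1) : ℕ) : ZMod p) = 0 :=
      (natCast_eq_zero_iff _ _).2 (hp.out.dvd_choose_self k.succ_ne_zero hk)
    rw [hpascal, Nat.cast_add, ih (by omega)] at hdvd
    rw [pow_succ]
    linear_combination hdvd

theorem inv_eq_pow_sub_two (hp2 : 2 < p) (a : ZMod p) : a⁻¹ = a ^ (p - 2) := by
  rcases eq_or_ne a 0 with rfl | ha
  · rw [inv_zero, zero_pow (by omega)]
  · refine (eq_inv_of_mul_eq_one_left ?_).symm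
    rw [← pow_succ, show p - 2 + 1 = p - 1 by omega, pow_card_sub_one_eq_one ha]

theorem pow_sub_eq_inv_pow {a : ZMod p} (ha : a ≠ 0) {t : ℕ} (ht : t ≤ p - 1) :
    a ^ (p - 1 - t) = a⁻¹ ^ t := by
  rw [inv_pow]
  refine eq_inv_of_mul_eq_one_left ?_
  rw [← pow_add, Nat.sub_add_cancel ht, pow_card_sub_one_eq_one ha]

theorem succ_mul_sum_range_pow {k : ℕ} (hk : k + 1 < p) (n : ℕ) :
    (k + 1 : ZMod p) * ∑ i ∈ range n, (i : ZMod p) ^ k =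
      ∑ t ∈ range (k + 1), PadicInt.toZMod (padicIntBernoulli p t) *
        ((k + 1).choose t : ZMod p) * (n : ZMod p) ^ (k + 1 - t) := by
  have hQ : ((k + 1 : ℕ) : ℚ_[p]) * ∑ i ∈ range n, (i : ℚ_[p]) ^ k =
      ∑ t ∈ range (k + 1), (bernoulli t : ℚ_[p]) * ((k + 1).choose t : ℚ_[p]) *
        (n : ℚ_[p]) ^ (k + 1 - t) := by
    rw [show ∑ i ∈ range n, (i : ℚ_[p]) ^ k = ((∑ i ∈ range n, (i : ℚ) ^ k : ℚ) : ℚ_[p]) by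
      push_cast; rfl, sum_range_pow, Rat.cast_sum, mul_sum]
    refine sum_congr rfl fun t _ ↦ ?_
    push_cast
    field_simp
  have hZ : ((k + 1 : ℕ) : ℤ_[p]) * ∑ i ∈ range n, (i : ℤ_[p]) ^ k =
      ∑ t ∈ range (k + 1), padicIntBernoulli p t * ((k + 1).choose t : ℤ_[p]) *
        (n : ℤ_[p]) ^ (k + 1 - t) := by
    apply Subtype.val_injective
    simp only [PadicInt.coe_sum, PadicInt.coe_mul, PadicInt.coe_pow, PadicInt.coe_natCast, hQ]
    refine sum_congr rfl fun t ht ↦ ?_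
    rw [coe_padicIntBernoulli (by grind)]
  simpa using congrArg PadicInt.toZMod hZ

theorem pairSum_inv_inv (hp3 : 3 < p) :
    pairSum (fun i : ℕ ↦ (i : ZMod p)⁻¹) (fun j ↦ (j : ZMod p)⁻¹) (p - 1) = 0 := by
  have h2 : (2 : ZMod p) ≠ 0 := Ring.two_ne_zero (by rw [ringChar_zmod_n]; omega)
  have hsq := two_mul_pairSum_self (fun i : ℕ ↦ (i : ZMod p)⁻¹) (p - 1)
  have h1 := sum_Icc_inv_pow_eq_zero (p := p) one_ne_zero (by omega)
  rw [funext fun k ↦ pow_one _] at h1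
  rw [h1, sum_Icc_inv_pow_eq_zero two_ne_zero (by omega)] at hsq
  simpa [h2] using hsq.symm

theorem pairSum_inv_cube_one_sub (hp5 : 5 ≤ p) :
    pairSum (fun i : ℕ ↦ (i : ZMod p)⁻¹ ^ 3) (fun j ↦ 1 - (j : ZMod p)) (p - 1) = 0 := by
  have h2 : (2 : ZMod p) ≠ 0 := Ring.two_ne_zero (by rw [ringChar_zmod_n]; omega)
  have hterm : ∀ i ∈ Icc 1 (p - 1),
      2 * ((i : ZMod p)⁻¹ ^ 3 * ∑ j ∈ Icc (i + 1) (p - 1), (1 - (j : ZMod p))) =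
        (i : ZMod p)⁻¹ - (i : ZMod p)⁻¹ ^ 2 - 2 * (i : ZMod p)⁻¹ ^ 3 := by
    intro i hi
    rw [mem_Icc] at hi
    have hi0 : (i : ZMod p) ≠ 0 := natCast_ne_zero_of_lt (by omega) (by omega)
    have hcard : ((p - 1 - i : ℕ) : ZMod p) = -1 - i := by
      rw [Nat.cast_sub hi.2, Nat.cast_sub hp.out.one_le, natCast_self]
      ring
    have htail := two_mul_sum_Icc_natCast (p := p) (j := i + 1) (by omega)
    rw [sum_sub_distrib, sum_const, Nat.card_Icc, show p - 1 + 1 - (i + 1) = p - 1 - i by omega,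
      nsmul_one, hcard]
    push_cast at htail
    field_simp
    linear_combination -htail
  rw [pairSum_eq_sum_mul_sum_Icc]
  refine (mul_eq_zero.1 ?_).resolve_left h2
  have h1 := sum_Icc_inv_pow_eq_zero (p := p) one_ne_zero (by omega)
  rw [funext fun k ↦ pow_one _] at h1
  rw [mul_sum, sum_congr rfl hterm, sum_sub_distrib, sum_sub_distrib, ← mul_sum, h1,
    sum_Icc_inv_pow_eq_zero two_ne_zero (by omega),
    sum_Icc_inv_pow_eq_zero three_ne_zero (by omega)]
  ring

theorem pairSum_inv_inv_sq (hp5 : 5 ≤ p) :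
    pairSum (fun i : ℕ ↦ (i : ZMod p)⁻¹) (fun j ↦ (j : ZMod p)⁻¹ ^ 2) (p - 1) =
      PadicInt.toZMod (padicIntBernoulli p (p - 3)) := by
  set β : ℕ → ZMod p := fun t ↦ PadicInt.toZMod (padicIntBernoulli p t)
  have hharm (j : ℕ) : ∑ i ∈ Ico 1 j, (i : ZMod p)⁻¹ =
      -∑ t ∈ range (p - 1), β t * ((p - 1).choose t : ZMod p) * (j : ZMod p) ^ (p - 1 - t) := by
    have hF := succ_mul_sum_range_pow (p := p) (k := p - 2) (by omega) j
    rw [show p - 2 + 1 = p - 1 by omega, Nat.cast_sub (by omega), natCast_self, Nat.cast_ofNat,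
      show (0 - 2 + 1 : ZMod p) = -1 by ring, neg_one_mul] at hF
    have hzero : ∑ i ∈ Ico 1 j, (i : ZMod p)⁻¹ = ∑ i ∈ range j, (i : ZMod p)⁻¹ :=
      sum_subset (fun i hi ↦ by simp only [mem_Ico, mem_range] at hi ⊢; omega) fun i hi hi' ↦ by
        obtain rfl : i = 0 := by simp only [mem_Ico, mem_range] at hi hi'; omega
        simp
    rw [hzero, ← hF, neg_neg]
    exact sum_congr rfl fun i _ ↦ inv_eq_pow_sub_two (by omega) _
  have hdvd {t : ℕ} (ht : t < p - 1) : p - 1 ∣ t + 2 ↔ t = p - 3 :=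
    ⟨fun h ↦ by have := Nat.eq_of_dvd_of_lt_two_mul (by omega) h (by omega); omega,
      fun h ↦ ⟨1, by omega⟩⟩
  have hodd : Even (p - 3) := Nat.Odd.sub_odd (hp.out.odd_of_ne_two (by omega)) (by decide)
  calc pairSum (fun i : ℕ ↦ (i : ZMod p)⁻¹) (fun j ↦ (j : ZMod p)⁻¹ ^ 2) (p - 1)
      = ∑ j ∈ Icc 1 (p - 1), ∑ t ∈ range (p - 1), -(β t * ((p - 1).choose t : ZMod p) *
          ((j : ZMod p) ^ (p - 1 - t) * (j : ZMod p)⁻¹ ^ 2)) := by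
        simp only [pairSum, ← sum_mul, hharm]
        simp only [neg_mul, sum_mul, ← sum_neg_distrib]
        exact sum_congr rfl fun j _ ↦ sum_congr rfl fun t _ ↦ by ring
    _ = ∑ t ∈ range (p - 1), -(β t * ((p - 1).choose t : ZMod p) *
          ∑ j ∈ Icc 1 (p - 1), (j : ZMod p)⁻¹ ^ (t + 2)) := by
        rw [sum_comm]
        refine sum_congr rfl fun t ht ↦ ?_
        rw [mul_sum, ← sum_neg_distrib]
        refine sum_congr rfl fun j hj ↦ ?_
        rw [mem_Icc] at hj
        rw [mem_range] at ht
        rw [pow_sub_eq_inv_pow (natCast_ne_zero_of_lt (by omega) (by omega)) ht.le, pow_add]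
    _ = β (p - 3) := by
        simp only [sum_Icc_inv_pow]
        rw [sum_eq_single_of_mem (p - 3) (mem_range.2 (by omega)),
          if_pos ((hdvd (by omega)).2 rfl), natCast_choose_pred (by omega), hodd.neg_one_pow]
        · ring
        · intro t ht hne
          rw [if_neg (mt (hdvd (mem_range.1 ht)).1 hne)]
          ring

theorem weightedMHS_inv (hp5 : 5 ≤ p) :
    weightedMHS (fun n : ℕ ↦ (n : ZMod p)⁻¹) (p - 1) =
      2⁻¹ * PadicInt.toZMod (padicIntBernoulli p (p - 3)) := by
  have h2 : (2 : ZMod p) ≠ 0 := Ring.two_ne_zero (by rw [ringChar_zmod_n]; omega)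
  have hT {j : ℕ} (hj : j ∈ Icc 1 (p - 1)) :
      2 * ∑ k ∈ Icc j (p - 1), (k : ZMod p) = j - j ^ 2 ∧ (j : ZMod p) ≠ 0 := by
    rw [mem_Icc] at hj
    exact ⟨two_mul_sum_Icc_natCast (by omega), natCast_ne_zero_of_lt (by omega) (by omega)⟩
  have hA : pairSum (fun i : ℕ ↦ (i : ZMod p)⁻¹)
      (fun j ↦ 2 * ((∑ k ∈ Icc j (p - 1), (k : ZMod p)) * (j : ZMod p)⁻¹ ^ 3)) (p - 1) =
      pairSum (fun i : ℕ ↦ (i : ZMod p)⁻¹) (fun j ↦ (j : ZMod p)⁻¹ ^ 2 - (j : ZMod p)⁻¹) (p - 1) :=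
    pairSum_congr (fun _ _ ↦ rfl) fun j hj ↦ by
      rw [← mul_assoc, (hT hj).1]; field_simp [(hT hj).2]
  have hB : pairSum (fun i : ℕ ↦ (i : ZMod p)⁻¹ ^ 3)
      (fun j ↦ 2 * ((∑ k ∈ Icc j (p - 1), (k : ZMod p)) * (j : ZMod p)⁻¹)) (p - 1) =
      pairSum (fun i : ℕ ↦ (i : ZMod p)⁻¹ ^ 3) (fun j ↦ 1 - (j : ZMod p)) (p - 1) :=
    pairSum_congr (fun _ _ ↦ rfl) fun j hj ↦ by
      rw [← mul_assoc, (hT hj).1]; field_simp [(hT hj).2]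
  rw [eq_inv_mul_iff_mul_eq₀ h2, weightedMHS_eq_pairSum, mul_add, mul_pairSum, mul_pairSum, hA, hB,
    pairSum_sub_right, pairSum_inv_inv_sq hp5, pairSum_inv_inv (by omega),
    pairSum_inv_cube_one_sub hp5, sub_zero, add_zero]

end ZMod

theorem stmt_8 (p : ℕ) [hp : Fact p.Prime] (hp3 : 3 < p) :
    ‖((∑ k ∈ Finset.Icc 1 (p - 1), (k : ℚ) *
        ∑ j ∈ Finset.Icc 1 k, ∑ i ∈ Finset.Ico 1 j,
          (1 / ((i : ℚ) * (j : ℚ) ^ 3) + 1 / ((i : ℚ) ^ 3 * j))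
        - 1 / 2 * bernoulli (p - 3) : ℚ) : ℚ_[p])‖ ≤ (p : ℝ) ^ (-1 : ℤ) := by
  have hp5 : 5 ≤ p := hp.out.five_le_of_ne_two_of_ne_three (by omega) (by omega)
  set X : ℤ_[p] := weightedMHS (fun n : ℕ ↦ (n : ℤ_[p]).inv) (p - 1) -
    ((2 : ℕ) : ℤ_[p]).inv * padicIntBernoulli p (p - 3) with hX
  have hlift : (X : ℚ_[p]) = weightedMHS (fun n : ℕ ↦ (n : ℚ_[p])⁻¹) (p - 1) -
      1 / 2 * (bernoulli (p - 3) : ℚ_[p]) := by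
    rw [hX, PadicInt.coe_sub, PadicInt.coe_mul, PadicInt.coe_weightedMHS_inv (by omega),
      PadicInt.coe_natCast_inv (by omega) (by omega), coe_padicIntBernoulli (by omega)]
    norm_num
  have hred : PadicInt.toZMod X = 0 := by
    rw [hX, map_sub, map_mul, PadicInt.toZMod_weightedMHS_inv, PadicInt.toZMod_inv, map_natCast,
      Nat.cast_ofNat, ZMod.weightedMHS_inv hp5, sub_self]
  push_cast
  rw [← weightedMHS_inv_eq_sum, ← hlift, PadicInt.padic_norm_e_of_padicInt]
  exact PadicInt.norm_le_inv_of_toZMod_eq_zero hred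
end

section
/- For any prime p > 3, sum_{k=0}^{p-1} (2pk - 2k - 1)·(-1)^k·C(2p-1, k) ≡ 8p^4 + 4p^3 + 3p^2 (mod p^5). -/
/-!
Both parts of the summand are partial alternating sums of a row of Pascal's triangle, which
telescope; for odd `p` the sum equals `p (2p - 3) C(2p-2, p-1)`. Since
`p C(2p, p) = 2 (2p - 1) C(2p-2, p-1)`, twice `(2p - 1)` times the sum is `p² (2p - 3) C(2p, p)`,
so the explicit factor `p²` means that Wolstenholme's congruence `C(2p, p) ≡ 2 (mod p³)` is all
that is needed modulo `p⁵`. Wolstenholme's congruence itself follows from Vandermonde,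
`C(2p, p) = ∑ C(p, k)²`, together with `C(p, k) ≡ (-1)^(k-1) p / k (mod p²)` for `0 < k < p`
and `∑_{x ∈ 𝔽_p} x⁻² = 0` for `p > 3`.
-/

open Finset Nat

theorem Int.alternating_sum_range_mul_choose (m n : ℕ) :
    ∑ k ∈ Finset.range (m + 2), ((-1) ^ k * k * (n + 2).choose k : ℤ) =
      (-1) ^ (m + 1) * (n + 2) * n.choose m := by
  have hterm (k : ℕ) : ((-1) ^ (k + 1) * ((k + 1 : ℕ) : ℤ) * (n + 2).choose (k + 1) : ℤ) =
      -(n + 2) * ((-1) ^ k * (n + 1).choose k) := by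
    have h : ((n + 2 : ℕ) : ℤ) * (n + 1).choose k =
        (n + 2).choose (k + 1) * ((k + 1 : ℕ) : ℤ) := by
      exact_mod_cast Nat.add_one_mul_choose_eq (n + 1) k
    push_cast at h ⊢
    linear_combination (-1 : ℤ) ^ k * h
  rw [sum_range_succ', Finset.sum_congr rfl fun k _ => hterm k, ← mul_sum,
    Int.alternating_sum_range_choose_eq_choose]
  ring

theorem sum_alternating_choose_two_mul_sub_one {p : ℕ} (hp : Odd p) (h : 1 < p) :
    ∑ k ∈ range p, (2 * (p : ℤ) * k - 2 * k - 1) * (-1) ^ k * ((2 * p - 1).choose k : ℤ) =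
      p * (2 * p - 3) * centralBinom (p - 1) := by
  obtain ⟨n, rfl⟩ : ∃ n, p = n + 2 := ⟨p - 2, by omega⟩
  have hsign : (-1 : ℤ) ^ (n + 1) = 1 := (Nat.odd_add.mp hp |>.mpr even_two).add_one.neg_one_pow
  have hmul := Int.alternating_sum_range_mul_choose n (2 * n + 1)
  have halt := Int.alternating_sum_range_choose_eq_choose (n := 2 * n + 2) (m := n + 1)
  have hcentral : (2 * n + 2).choose (n + 1) = centralBinom (n + 1) := by
    rw [centralBinom_eq_two_mul_choose, mul_add_one]
  have hpascal : ((2 * n + 2 : ℕ) : ℤ) * (2 * n + 1).choose n =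
      centralBinom (n + 1) * ((n + 1 : ℕ) : ℤ) := by
    rw [← hcentral]
    exact_mod_cast Nat.add_one_mul_choose_eq (2 * n + 1) n
  rw [show 2 * (n + 2) - 1 = 2 * n + 1 + 2 by omega]
  calc _ = (2 * (n + 1) : ℤ) *
          ∑ k ∈ range (n + 2), ((-1) ^ k * k * (2 * n + 1 + 2).choose k : ℤ) -
        ∑ k ∈ range (n + 2), ((-1) ^ k * (2 * n + 2 + 1).choose k : ℤ) := by
        rw [mul_sum, ← sum_sub_distrib]
        refine sum_congr rfl fun k _ => ?_
        push_cast
        ring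
    _ = _ := by
      rw [hmul, halt, hsign, hcentral]
      push_cast at hpascal ⊢
      linear_combination (2 * (n : ℤ) + 3) * hpascal

theorem Int.mul_centralBinom_eq_of_pos {n : ℕ} (hn : 0 < n) :
    (n : ℤ) * centralBinom n = 2 * (2 * n - 1) * centralBinom (n - 1) := by
  have h := Nat.succ_mul_centralBinom_succ (n - 1)
  rw [Nat.sub_add_cancel hn] at h
  zify [hn] at h
  linear_combination h

theorem FiniteField.sum_inv_pow_eq_zero {K : Type*} [Field K] [Fintype K] {i : ℕ}
    (hi : i < Fintype.card K - 1) : ∑ x : K, x⁻¹ ^ i = 0 := by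
  rw [← Equiv.sum_comp (Equiv.inv K)]
  simpa using FiniteField.sum_pow_lt_card_sub_one K i hi

theorem ZMod.sum_range_natCast {p : ℕ} [NeZero p] {M : Type*} [AddCommMonoid M]
    (f : ZMod p → M) : ∑ k ∈ Finset.range p, f k = ∑ x : ZMod p, f x := by
  obtain ⟨q, rfl⟩ := Nat.exists_eq_succ_of_ne_zero (NeZero.ne p)
  rw [← Fin.sum_univ_eq_sum_range (fun k => f k)]
  exact Fintype.sum_congr _ _ fun i => congrArg f (Fin.cast_val_eq_self i)

theorem ZMod.natCast_sub_one_choose {p : ℕ} (hp : p.Prime) {j : ℕ} (hj : j < p) :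
    ((p - 1).choose j : ZMod p) = (-1) ^ j := by
  have h := congrArg (Int.cast : ℤ → ZMod p)
    (Int.alternating_sum_range_choose_eq_choose (n := p - 1) (m := j))
  rw [Nat.sub_add_cancel hp.one_le, sum_range_succ'] at h
  push_cast at h
  rw [Finset.sum_eq_zero fun k hk => ?_] at h
  · have hsq : ((-1 : ZMod p) ^ j) ^ 2 = 1 := by rw [← pow_mul, pow_mul', neg_one_sq, one_pow]
    simp only [Nat.choose_zero_right, Nat.cast_one, mul_one, zero_add] at h
    linear_combination (-(-1 : ZMod p) ^ j) * h - ((p - 1).choose j : ZMod p) * hsq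
  · rw [(ZMod.natCast_eq_zero_iff _ _).mpr
      (hp.dvd_choose_self k.succ_ne_zero (by grind)), mul_zero]

theorem ZMod.natCast_choose_div_self {p : ℕ} [Fact p.Prime] {k : ℕ} (hk0 : 0 < k)
    (hkp : k < p) : ((p.choose k / p : ℕ) : ZMod p) = (-1) ^ (k - 1) * (k : ZMod p)⁻¹ := by
  have hp : p.Prime := Fact.out
  obtain ⟨j, rfl⟩ : ∃ j, k = j + 1 := ⟨k - 1, by omega⟩
  have hdiv : p * (p.choose (j + 1) / p) = p.choose (j + 1) :=
    Nat.mul_div_cancel' (hp.dvd_choose_self (by omega) hkp)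
  have hpred : (p - 1).choose j = p.choose (j + 1) / p * (j + 1) := by
    have h := Nat.add_one_mul_choose_eq (p - 1) j
    rw [Nat.sub_add_cancel hp.one_le, ← hdiv, mul_assoc] at h
    exact Nat.eq_of_mul_eq_mul_left hp.pos h
  have hk : ((j + 1 : ℕ) : ZMod p) ≠ 0 := by
    rw [Ne, ZMod.natCast_eq_zero_iff]
    exact Nat.not_dvd_of_pos_of_lt (by omega) hkp
  rw [Nat.add_sub_cancel, eq_mul_inv_iff_mul_eq₀ hk, ← Nat.cast_mul, ← hpred,
    ZMod.natCast_sub_one_choose hp (by omega)]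

theorem Nat.Prime.dvd_sum_sq_choose_div_self {p : ℕ} (hp : p.Prime) (h : 3 < p) :
    p ∣ ∑ k ∈ range p, (p.choose k / p) ^ 2 := by
  have : Fact p.Prime := ⟨hp⟩
  rw [← ZMod.natCast_eq_zero_iff]
  push_cast
  calc ∑ k ∈ range p, ((p.choose k / p : ℕ) : ZMod p) ^ 2
      = ∑ k ∈ range p, (k : ZMod p)⁻¹ ^ 2 := by
        refine sum_congr rfl fun k hk => ?_
        rcases Nat.eq_zero_or_pos k with rfl | hk0
        · simp [Nat.div_eq_of_lt hp.one_lt]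
        · rw [ZMod.natCast_choose_div_self hk0 (mem_range.mp hk), mul_pow, ← pow_mul,
            pow_mul', neg_one_sq, one_pow, one_mul]
    _ = ∑ x : ZMod p, x⁻¹ ^ 2 := ZMod.sum_range_natCast fun x => x⁻¹ ^ 2
    _ = 0 := FiniteField.sum_inv_pow_eq_zero (by rw [ZMod.card]; omega)

theorem Nat.Prime.centralBinom_eq_two_add {p : ℕ} (hp : p.Prime) :
    centralBinom p = 2 + p ^ 2 * ∑ k ∈ range p, (p.choose k / p) ^ 2 := by
  obtain ⟨q, rfl⟩ : ∃ q, p = q + 1 := ⟨p - 1, (Nat.sub_add_cancel hp.one_le).symm⟩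
  rw [centralBinom_eq_two_mul_choose, ← sum_range_choose_sq, sum_range_succ, sum_range_succ',
    sum_range_succ', mul_add, mul_sum]
  have hdiv (i : ℕ) (hi : i ∈ range q) : (q + 1).choose (i + 1) ^ 2 =
      (q + 1) ^ 2 * ((q + 1).choose (i + 1) / (q + 1)) ^ 2 := by
    rw [← mul_pow, Nat.mul_div_cancel' (hp.dvd_choose_self i.succ_ne_zero (by simpa using hi))]
  rw [sum_congr rfl hdiv, Nat.div_eq_of_lt (a := (q + 1).choose 0) (by simpa using hp.one_lt)]
  simp only [choose_zero_right, choose_self, one_pow, zero_pow two_ne_zero, mul_zero, add_zero]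
  ring

theorem Nat.Prime.centralBinom_modEq_two {p : ℕ} (hp : p.Prime) (h : 3 < p) :
    (centralBinom p : ℤ) ≡ 2 [ZMOD p ^ 3] := by
  obtain ⟨s, hs⟩ := hp.dvd_sum_sq_choose_div_self h
  rw [hp.centralBinom_eq_two_add, hs, Int.modEq_iff_dvd]
  exact ⟨-s, by push_cast; ring⟩

theorem stmt_17 (p : ℕ) (hp : p.Prime) (hp3 : 3 < p) :
    (∑ k ∈ Finset.range p,
        (2 * (p : ℤ) * k - 2 * k - 1) * (-1) ^ k * (Nat.choose (2 * p - 1) k : ℤ))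
      ≡ 8 * (p : ℤ) ^ 4 + 4 * (p : ℤ) ^ 3 + 3 * (p : ℤ) ^ 2 [ZMOD (p : ℤ) ^ 5] := by
  have hodd : Odd p := hp.odd_of_ne_two (by omega)
  obtain ⟨t, ht⟩ := (hp.centralBinom_modEq_two hp3).dvd
  have hrec := Int.mul_centralBinom_eq_of_pos hp.pos
  have hcop : IsCoprime ((p : ℤ) ^ 5) (2 * (2 * p - 1)) := by
    refine IsCoprime.pow_left (IsCoprime.mul_right ?_ ⟨2, -1, by ring⟩)
    obtain ⟨r, hr⟩ := hodd
    exact ⟨1, -r, by rw [hr]; push_cast; ring⟩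
  rw [sum_alternating_choose_two_mul_sub_one hodd hp.one_lt, Int.modEq_iff_dvd]
  refine hcop.dvd_of_dvd_mul_right ⟨(2 * p - 3) * t + 32, ?_⟩
  linear_combination (p : ℤ) * (2 * p - 3) * hrec + (p : ℤ) ^ 2 * (2 * p - 3) * ht
end
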